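/- arXiv:2504.16403 — 3 statements merged into one kernel-verified Lean document; each statement's English description precedes it below -/
import Mathlib

section
/- Every solution of the four-body system in the center-of-mass frame satisfies r₃(t) = r₁(t + π/ω) and r₄(t) = r₂(t + π/ω) for all t ∈ ℝ; that is, the most general center-of-mass motion consists of two two-body choreographies: bodies 1 and 3 traverse one common closed curve with time delay 2τ = π/ω, and bodies 2 and 4 traverse another common closed curve with the same time delay. -/
noncomputable section

/-- The Euclidean plane. -/
abbrev Plane : Type := EuclideanSpace ℝ (Fin 2)

/-- A solution of the planar four-body system with pairwise quadratic potential
`V = (mω²/4)(2‖r₁−r₂‖² + 2‖r₂−r₃‖² + 2‖r₃−r₄‖² + 2‖r₁−r₄‖² − ‖r₁−r₃‖² − ‖r₂−r₄‖²)`: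
four twice differentiable curves satisfying Newton's equations
`rᵢ'' = −ω²((rᵢ − r_{i+1}) + (rᵢ − r_{i−1}) − ½(rᵢ − r_{i+2}))` (indices mod 4). -/
def IsFourBodySolution (ω : ℝ) (r₁ r₂ r₃ r₄ : ℝ → Plane) : Prop :=
  (Differentiable ℝ r₁ ∧ Differentiable ℝ (deriv r₁)) ∧
  (Differentiable ℝ r₂ ∧ Differentiable ℝ (deriv r₂)) ∧
  (Differentiable ℝ r₃ ∧ Differentiable ℝ (deriv r₃)) ∧
  (Differentiable ℝ r₄ ∧ Differentiable ℝ (deriv r₄)) ∧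
  (∀ t : ℝ, deriv (deriv r₁) t =
    (-(ω ^ 2)) • ((r₁ t - r₂ t) + (r₁ t - r₄ t) - (1 / 2 : ℝ) • (r₁ t - r₃ t))) ∧
  (∀ t : ℝ, deriv (deriv r₂) t =
    (-(ω ^ 2)) • ((r₂ t - r₃ t) + (r₂ t - r₁ t) - (1 / 2 : ℝ) • (r₂ t - r₄ t))) ∧
  (∀ t : ℝ, deriv (deriv r₃) t =
    (-(ω ^ 2)) • ((r₃ t - r₄ t) + (r₃ t - r₂ t) - (1 / 2 : ℝ) • (r₃ t - r₁ t))) ∧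
  (∀ t : ℝ, deriv (deriv r₄) t =
    (-(ω ^ 2)) • ((r₄ t - r₁ t) + (r₄ t - r₃ t) - (1 / 2 : ℝ) • (r₄ t - r₂ t)))

/-! The total force vanishes, so the centre of mass moves freely and, starting at rest at the
origin, stays there. The differences `r₁ - r₃` and `r₂ - r₄` are harmonic oscillators of
frequency `ω`, hence antiperiodic with antiperiod `π / ω`; once the centre of mass is eliminated,
`r₁ + r₃ = -(r₂ + r₄)` oscillates with frequency `2ω` and is therefore `π / ω`-periodic. Adding the
two relations gives `r₁ (t + π / ω) = r₃ t`, and the pair `(2, 4)` follows by relabelling the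
bodies cyclically. -/

open Function Real

section HarmonicOscillator

variable {E : Type*} [NormedAddCommGroup E] [InnerProductSpace ℝ E]

def IsHarmonicOscillator (c : ℝ) (f f' : ℝ → E) : Prop :=
  ∀ t, HasDerivAt f (f' t) t ∧ HasDerivAt f' (-(c ^ 2) • f t) t

variable {c : ℝ} {f f' g g' : ℝ → E}

theorem IsHarmonicOscillator.sub (hf : IsHarmonicOscillator c f f')
    (hg : IsHarmonicOscillator c g g') : IsHarmonicOscillator c (f - g) (f' - g') := fun t =>
  ⟨(hf t).1.sub (hg t).1, ((hf t).2.sub (hg t).2).congr_deriv (smul_sub _ _ _).symm⟩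

theorem isHarmonicOscillator_cos_smul_add_sin_smul (hc : c ≠ 0) (x v : E) :
    IsHarmonicOscillator c (fun t => cos (c * t) • x + (sin (c * t) / c) • v)
      (fun t => (-(c * sin (c * t))) • x + cos (c * t) • v) := by
  intro t
  have hct : HasDerivAt (fun u : ℝ => c * u) c t := by
    simpa using (hasDerivAt_id t).const_mul c
  have hcos : HasDerivAt (fun u => cos (c * u)) (-sin (c * t) * c) t :=
    (hasDerivAt_cos (c * t)).comp t hct
  have hsin : HasDerivAt (fun u => sin (c * u)) (cos (c * t) * c) t :=
    (hasDerivAt_sin (c * t)).comp t hct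
  constructor
  · refine ((hcos.smul_const x).add ((hsin.div_const c).smul_const v)).congr_deriv ?_
    rw [mul_div_cancel_right₀ _ hc, neg_mul, mul_comm]
  · refine (((hsin.const_mul c).neg.smul_const x).add (hcos.smul_const v)).congr_deriv ?_
    match_scalars <;> field_simp

/-- The energy `c² ‖f‖² + ‖f'‖²` is conserved, so it vanishes identically; hence `f' = 0`. -/
theorem IsHarmonicOscillator.eq_zero (hf : IsHarmonicOscillator c f f') (h₀ : f 0 = 0)
    (h₀' : f' 0 = 0) (t : ℝ) : f t = 0 := by
  have henergy : ∀ s, HasDerivAt (fun u => c ^ 2 * ‖f u‖ ^ 2 + ‖f' u‖ ^ 2) 0 s := fun s => by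
    refine (((hf s).1.norm_sq.const_mul (c ^ 2)).add (hf s).2.norm_sq).congr_deriv ?_
    rw [real_inner_smul_right, real_inner_comm]
    ring
  have hvel : ∀ s, f' s = 0 := fun s => by
    have hconst := is_const_of_deriv_eq_zero (fun u => (henergy u).differentiableAt)
      (fun u => (henergy u).deriv) s 0
    simp only [h₀, h₀', norm_zero] at hconst
    have : ‖f' s‖ ^ 2 = 0 := by nlinarith [sq_nonneg c, sq_nonneg ‖f s‖, sq_nonneg ‖f' s‖]
    simpa using this
  rw [← h₀]
  exact is_const_of_deriv_eq_zero (fun u => (hf u).1.differentiableAt)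
    (fun u => by rw [(hf u).1.deriv, hvel]) t 0

theorem IsHarmonicOscillator.eq_cos_smul_add_sin_smul (hf : IsHarmonicOscillator c f f')
    (hc : c ≠ 0) (t : ℝ) : f t = cos (c * t) • f 0 + (sin (c * t) / c) • f' 0 := by
  have hdiff := hf.sub (isHarmonicOscillator_cos_smul_add_sin_smul hc (f 0) (f' 0))
  exact sub_eq_zero.mp (hdiff.eq_zero (by simp) (by simp) t)

theorem IsHarmonicOscillator.antiperiodic (hf : IsHarmonicOscillator c f f') (hc : c ≠ 0) :
    Antiperiodic f (π / c) := fun t => by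
  rw [hf.eq_cos_smul_add_sin_smul hc, hf.eq_cos_smul_add_sin_smul hc t,
    show c * (t + π / c) = c * t + π by field_simp, cos_add_pi, sin_add_pi]
  module

end HarmonicOscillator

theorem apply_add_eq_of_antiperiodic_sub_of_periodic_add {E : Type*} [AddCommGroup E]
    [Module ℝ E] {x y : ℝ → E} {T : ℝ} (hsub : Antiperiodic (x - y) T)
    (hadd : Periodic (x + y) T) (t : ℝ) : x (t + T) = y t := by
  have h₁ := hsub t
  have h₂ := hadd t
  simp only [Pi.sub_apply, Pi.add_apply] at h₁ h₂
  calc x (t + T) = (2 : ℝ)⁻¹ • ((x (t + T) + y (t + T)) + (x (t + T) - y (t + T))) := by module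
    _ = y t := by rw [h₁, h₂]; module

namespace IsFourBodySolution

variable {ω : ℝ} {r₁ r₂ r₃ r₄ : ℝ → Plane}

theorem rotate (h : IsFourBodySolution ω r₁ r₂ r₃ r₄) : IsFourBodySolution ω r₂ r₃ r₄ r₁ := by
  obtain ⟨h₁, h₂, h₃, h₄, e₁, e₂, e₃, e₄⟩ := h
  exact ⟨h₂, h₃, h₄, h₁, e₂, e₃, e₄, e₁⟩

theorem sum_eq_zero (h : IsFourBodySolution ω r₁ r₂ r₃ r₄)
    (hr : r₁ 0 + r₂ 0 + r₃ 0 + r₄ 0 = 0)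
    (hv : deriv r₁ 0 + deriv r₂ 0 + deriv r₃ 0 + deriv r₄ 0 = 0) (t : ℝ) :
    r₁ t + r₂ t + r₃ t + r₄ t = 0 := by
  obtain ⟨⟨d₁, d₁'⟩, ⟨d₂, d₂'⟩, ⟨d₃, d₃'⟩, ⟨d₄, d₄'⟩, e₁, e₂, e₃, e₄⟩ := h
  have hosc : IsHarmonicOscillator 0 (r₁ + r₂ + r₃ + r₄)
      (deriv r₁ + deriv r₂ + deriv r₃ + deriv r₄) := fun s =>
    ⟨(((d₁ s).hasDerivAt.add (d₂ s).hasDerivAt).add (d₃ s).hasDerivAt).add (d₄ s).hasDerivAt,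
      ((((d₁' s).hasDerivAt.add (d₂' s).hasDerivAt).add (d₃' s).hasDerivAt).add
        (d₄' s).hasDerivAt).congr_deriv (by rw [e₁, e₂, e₃, e₄]; module)⟩
  exact hosc.eq_zero hr hv t

theorem sub_isHarmonicOscillator (h : IsFourBodySolution ω r₁ r₂ r₃ r₄) :
    IsHarmonicOscillator ω (r₁ - r₃) (deriv r₁ - deriv r₃) := by
  obtain ⟨⟨d₁, d₁'⟩, -, ⟨d₃, d₃'⟩, -, e₁, -, e₃, -⟩ := h
  exact fun t => ⟨(d₁ t).hasDerivAt.sub (d₃ t).hasDerivAt,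
    ((d₁' t).hasDerivAt.sub (d₃' t).hasDerivAt).congr_deriv (by rw [e₁, e₃, Pi.sub_apply]; module)⟩

/-- Eliminating `r₂ + r₄ = -(r₁ + r₃)` leaves an oscillator of doubled frequency. -/
theorem add_isHarmonicOscillator (h : IsFourBodySolution ω r₁ r₂ r₃ r₄)
    (hS : ∀ t, r₁ t + r₂ t + r₃ t + r₄ t = 0) :
    IsHarmonicOscillator (2 * ω) (r₁ + r₃) (deriv r₁ + deriv r₃) := by
  obtain ⟨⟨d₁, d₁'⟩, -, ⟨d₃, d₃'⟩, -, e₁, -, e₃, -⟩ := h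
  refine fun t => ⟨(d₁ t).hasDerivAt.add (d₃ t).hasDerivAt,
    ((d₁' t).hasDerivAt.add (d₃' t).hasDerivAt).congr_deriv ?_⟩
  rw [e₁, e₃, Pi.add_apply, eq_neg_of_add_eq_zero_right (hS t)]
  module

theorem choreography (h : IsFourBodySolution ω r₁ r₂ r₃ r₄) (hω : ω ≠ 0)
    (hS : ∀ t, r₁ t + r₂ t + r₃ t + r₄ t = 0) (t : ℝ) : r₃ t = r₁ (t + π / ω) := by
  have hperiodic : Periodic (r₁ + r₃) (π / ω) := by
    have := ((h.add_isHarmonicOscillator hS).antiperiodic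
      (mul_ne_zero two_ne_zero hω)).periodic_two_mul
    rwa [show 2 * (π / (2 * ω)) = π / ω by field_simp] at this
  exact (apply_add_eq_of_antiperiodic_sub_of_periodic_add
    (h.sub_isHarmonicOscillator.antiperiodic hω) hperiodic t).symm

end IsFourBodySolution

/-- In the center-of-mass frame, every solution consists of two two-body
choreographies: bodies 1,3 share a common curve with delay `2τ = π/ω`, as do bodies 2,4. -/
theorem two_two_body_choreographies (m ω : ℝ) (hm : 0 < m) (hω : 0 < ω)
    (r₁ r₂ r₃ r₄ : ℝ → Plane)
    (hsol : IsFourBodySolution ω r₁ r₂ r₃ r₄)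
    (hcomr : r₁ 0 + r₂ 0 + r₃ 0 + r₄ 0 = 0)
    (hcomp : m • deriv r₁ 0 + m • deriv r₂ 0 + m • deriv r₃ 0 + m • deriv r₄ 0 = 0) :
    ∀ t : ℝ, r₃ t = r₁ (t + Real.pi / ω) ∧ r₄ t = r₂ (t + Real.pi / ω) := by
  have hv : deriv r₁ 0 + deriv r₂ 0 + deriv r₃ 0 + deriv r₄ 0 = 0 := by
    rw [← smul_add, ← smul_add, ← smul_add] at hcomp
    exact (smul_eq_zero.mp hcomp).resolve_left hm.ne'
  have hS := hsol.sum_eq_zero hcomr hv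
  refine fun t => ⟨hsol.choreography hω.ne' hS t, hsol.rotate.choreography hω.ne' (fun s => ?_) t⟩
  rw [← hS s]
  abel
end
end

section
/- (The eleventh, cubic integral establishing maximal superintegrability.) For every solution of the four-body system, with U₁ = (1/√2)(r₄ − r₂) = (U₁ₓ, U₁_y), P₁ = (1/√2)(p₄ − p₂) = (P₁ₓ, P₁_y), U₃ = ½((r₂+r₄) − (r₁+r₃)) = (U₃ₓ, U₃_y), and P₃ = ½((p₂+p₄) − (p₁+p₃)) = (P₃ₓ, P₃_y), the cubic quantity 𝓘(t) = P₁ₓ(t)² P₃_y(t) + 4m²ω² U₁ₓ(t) U₃_y(t) P₁ₓ(t) − m²ω² U₁ₓ(t)² P₃_y(t) is constant: 𝓘(t) = 𝓘(0) for all t ∈ ℝ. -/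
noncomputable section

/-- Normal-mode coordinate `U₃ = ½((r₂+r₄) − (r₁+r₃))`. -/
def U3 (r₁ r₂ r₃ r₄ : ℝ → Plane) (t : ℝ) : Plane :=
  (1 / 2 : ℝ) • ((r₂ t + r₄ t) - (r₁ t + r₃ t))

/-- Normal-mode momentum `P₃ = ½((p₂+p₄) − (p₁+p₃))`, where `pᵢ = m rᵢ'`. -/
def P3 (m : ℝ) (r₁ r₂ r₃ r₄ : ℝ → Plane) (t : ℝ) : Plane :=
  (1 / 2 : ℝ) • ((m • deriv r₂ t + m • deriv r₄ t) - (m • deriv r₁ t + m • deriv r₃ t))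

/-- Normal-mode coordinate `U₁ = (1/√2)(r₄ − r₂)`. -/
def U1 (r₂ r₄ : ℝ → Plane) (t : ℝ) : Plane :=
  (1 / Real.sqrt 2) • (r₄ t - r₂ t)

/-- Normal-mode momentum `P₁ = (1/√2)(p₄ − p₂)`, where `pᵢ = m rᵢ'`. -/
def P1 (m : ℝ) (r₂ r₄ : ℝ → Plane) (t : ℝ) : Plane :=
  (1 / Real.sqrt 2) • (m • deriv r₄ t - m • deriv r₂ t)

/-!
Along a solution the normal modes decouple: `U₁` oscillates with frequency `ω` and `U₃` with
frequency `2ω`, and `Pᵢ = m Uᵢ'`. For two harmonic oscillators in `1 : 2` resonance the cubic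
`v²w + 4ω²xyv − ω²x²w` in positions `x, y` and velocities `v, w` has derivative zero, as one
checks by differentiating and substituting `x'' = -ω²x`, `y'' = -4ω²y`.
-/

theorem HasDerivAt.euclideanSpace_apply {ι : Type*} [Fintype ι] {f : ℝ → EuclideanSpace ℝ ι}
    {f' : EuclideanSpace ℝ ι} {t : ℝ} (hf : HasDerivAt f f' t) (i : ι) :
    HasDerivAt (fun s => f s i) (f' i) t := by
  have h := (EuclideanSpace.proj (𝕜 := ℝ) i).hasFDerivAt.comp_hasDerivAt t hf
  exact h

/-- Conserved by oscillators `x'' = -ω²x`, `y'' = -(2ω)²y` with velocities `v = x'`, `w = y'`;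
the paper's `𝓘` is `m³` times its value at `(U₁ₓ, U₁ₓ', U₃_y, U₃_y')`. -/
def resonantCubicIntegral (ω x v y w : ℝ) : ℝ :=
  v ^ 2 * w + 4 * ω ^ 2 * x * y * v - ω ^ 2 * x ^ 2 * w

theorem resonantCubicIntegral_eq_of_hasDerivAt {ω : ℝ} {x v y w : ℝ → ℝ}
    (hx : ∀ t, HasDerivAt x (v t) t) (hv : ∀ t, HasDerivAt v (-ω ^ 2 * x t) t)
    (hy : ∀ t, HasDerivAt y (w t) t) (hw : ∀ t, HasDerivAt w (-(2 * ω) ^ 2 * y t) t) (t : ℝ) :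
    resonantCubicIntegral ω (x t) (v t) (y t) (w t)
      = resonantCubicIntegral ω (x 0) (v 0) (y 0) (w 0) := by
  have hderiv : ∀ s, HasDerivAt (fun s => resonantCubicIntegral ω (x s) (v s) (y s) (w s)) 0 s := by
    intro s
    have h := ((((hv s).pow 2).mul (hw s)).add
      ((((hx s).const_mul (4 * ω ^ 2)).mul (hy s)).mul (hv s))).sub
      (((hx s).pow 2).const_mul (ω ^ 2) |>.mul (hw s))
    exact h.congr_deriv (by simp only [Pi.mul_apply, Pi.pow_apply]; ring)
  exact is_const_of_deriv_eq_zero (fun s => (hderiv s).differentiableAt)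
    (fun s => (hderiv s).deriv) t 0

section NormalModes

variable {r₁ r₂ r₃ r₄ : ℝ → Plane}

theorem hasDerivAt_U1 {t : ℝ} (h₂ : DifferentiableAt ℝ r₂ t) (h₄ : DifferentiableAt ℝ r₄ t) :
    HasDerivAt (U1 r₂ r₄) (U1 (deriv r₂) (deriv r₄) t) t :=
  (h₄.hasDerivAt.sub h₂.hasDerivAt).const_smul (1 / Real.sqrt 2)

theorem hasDerivAt_U3 {t : ℝ} (h₁ : DifferentiableAt ℝ r₁ t) (h₂ : DifferentiableAt ℝ r₂ t)
    (h₃ : DifferentiableAt ℝ r₃ t) (h₄ : DifferentiableAt ℝ r₄ t) :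
    HasDerivAt (U3 r₁ r₂ r₃ r₄) (U3 (deriv r₁) (deriv r₂) (deriv r₃) (deriv r₄) t) t :=
  ((h₂.hasDerivAt.add h₄.hasDerivAt).sub (h₁.hasDerivAt.add h₃.hasDerivAt)).const_smul (1 / 2 : ℝ)

theorem P1_eq_smul_U1_deriv (m t : ℝ) : P1 m r₂ r₄ t = m • U1 (deriv r₂) (deriv r₄) t := by
  simp only [P1, U1, ← smul_sub, smul_comm m]

theorem P3_eq_smul_U3_deriv (m t : ℝ) :
    P3 m r₁ r₂ r₃ r₄ t = m • U3 (deriv r₁) (deriv r₂) (deriv r₃) (deriv r₄) t := by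
  simp only [P3, U3, ← smul_add, ← smul_sub, smul_comm m]

namespace IsFourBodySolution

variable {ω : ℝ}

theorem hasDerivAt_U1 (h : IsFourBodySolution ω r₁ r₂ r₃ r₄) (t : ℝ) :
    HasDerivAt (U1 r₂ r₄) (U1 (deriv r₂) (deriv r₄) t) t :=
  _root_.hasDerivAt_U1 (h.2.1.1 t) (h.2.2.2.1.1 t)

theorem hasDerivAt_U1_deriv (h : IsFourBodySolution ω r₁ r₂ r₃ r₄) (t : ℝ) :
    HasDerivAt (U1 (deriv r₂) (deriv r₄)) (-ω ^ 2 • U1 r₂ r₄ t) t := by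
  convert _root_.hasDerivAt_U1 (h.2.1.2 t) (h.2.2.2.1.2 t) using 1
  simp only [U1]
  rw [h.2.2.2.2.2.1 t, h.2.2.2.2.2.2.2 t]
  module

theorem hasDerivAt_U3 (h : IsFourBodySolution ω r₁ r₂ r₃ r₄) (t : ℝ) :
    HasDerivAt (U3 r₁ r₂ r₃ r₄) (U3 (deriv r₁) (deriv r₂) (deriv r₃) (deriv r₄) t) t :=
  _root_.hasDerivAt_U3 (h.1.1 t) (h.2.1.1 t) (h.2.2.1.1 t) (h.2.2.2.1.1 t)

theorem hasDerivAt_U3_deriv (h : IsFourBodySolution ω r₁ r₂ r₃ r₄) (t : ℝ) :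
    HasDerivAt (U3 (deriv r₁) (deriv r₂) (deriv r₃) (deriv r₄))
      (-(2 * ω) ^ 2 • U3 r₁ r₂ r₃ r₄ t) t := by
  convert _root_.hasDerivAt_U3 (h.1.2 t) (h.2.1.2 t) (h.2.2.1.2 t) (h.2.2.2.1.2 t) using 1
  simp only [U3]
  rw [h.2.2.2.2.1 t, h.2.2.2.2.2.1 t, h.2.2.2.2.2.2.1 t, h.2.2.2.2.2.2.2 t]
  module

end IsFourBodySolution

end NormalModes

theorem eleventh_cubic_integral_conserved_general (m ω : ℝ)
    (r₁ r₂ r₃ r₄ : ℝ → Plane)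
    (hsol : IsFourBodySolution ω r₁ r₂ r₃ r₄) :
    ∀ t : ℝ,
      P1 m r₂ r₄ t 0 ^ 2 * P3 m r₁ r₂ r₃ r₄ t 1
        + 4 * m ^ 2 * ω ^ 2 * U1 r₂ r₄ t 0 * U3 r₁ r₂ r₃ r₄ t 1 * P1 m r₂ r₄ t 0
        - m ^ 2 * ω ^ 2 * U1 r₂ r₄ t 0 ^ 2 * P3 m r₁ r₂ r₃ r₄ t 1
      = P1 m r₂ r₄ 0 0 ^ 2 * P3 m r₁ r₂ r₃ r₄ 0 1
        + 4 * m ^ 2 * ω ^ 2 * U1 r₂ r₄ 0 0 * U3 r₁ r₂ r₃ r₄ 0 1 * P1 m r₂ r₄ 0 0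
        - m ^ 2 * ω ^ 2 * U1 r₂ r₄ 0 0 ^ 2 * P3 m r₁ r₂ r₃ r₄ 0 1 := by
  intro t
  have key := resonantCubicIntegral_eq_of_hasDerivAt
    (fun s => (hsol.hasDerivAt_U1 s).euclideanSpace_apply 0)
    (fun s => by
      simpa only [PiLp.smul_apply, smul_eq_mul] using
        (hsol.hasDerivAt_U1_deriv s).euclideanSpace_apply 0)
    (fun s => (hsol.hasDerivAt_U3 s).euclideanSpace_apply 1)
    (fun s => by
      simpa only [PiLp.smul_apply, smul_eq_mul] using
        (hsol.hasDerivAt_U3_deriv s).euclideanSpace_apply 1) t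
  simp only [resonantCubicIntegral] at key
  simp only [P1_eq_smul_U1_deriv, P3_eq_smul_U3_deriv, PiLp.smul_apply, smul_eq_mul]
  linear_combination m ^ 3 * key

/-- The cubic quantity
`𝓘 = P₁ₓ² P₃_y + 4m²ω² U₁ₓ U₃_y P₁ₓ − m²ω² U₁ₓ² P₃_y` (the eleventh integral,
establishing maximal superintegrability) is a constant of motion. -/
theorem eleventh_cubic_integral_conserved (m ω : ℝ) (hm : 0 < m) (hω : 0 < ω)
    (r₁ r₂ r₃ r₄ : ℝ → Plane)
    (hsol : IsFourBodySolution ω r₁ r₂ r₃ r₄) :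
    ∀ t : ℝ,
      P1 m r₂ r₄ t 0 ^ 2 * P3 m r₁ r₂ r₃ r₄ t 1
        + 4 * m ^ 2 * ω ^ 2 * U1 r₂ r₄ t 0 * U3 r₁ r₂ r₃ r₄ t 1 * P1 m r₂ r₄ t 0
        - m ^ 2 * ω ^ 2 * U1 r₂ r₄ t 0 ^ 2 * P3 m r₁ r₂ r₃ r₄ t 1
      = P1 m r₂ r₄ 0 0 ^ 2 * P3 m r₁ r₂ r₃ r₄ 0 1
        + 4 * m ^ 2 * ω ^ 2 * U1 r₂ r₄ 0 0 * U3 r₁ r₂ r₃ r₄ 0 1 * P1 m r₂ r₄ 0 0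
        - m ^ 2 * ω ^ 2 * U1 r₂ r₄ 0 0 ^ 2 * P3 m r₁ r₂ r₃ r₄ 0 1 :=
  eleventh_cubic_integral_conserved_general m ω r₁ r₂ r₃ r₄ hsol
end
end

section
/- (Particular integrals.) Along the trisectrix limaçon solution, the scalar products r₁₃(t) · r₂₄(t) and p₁₃(t) · p₂₄(t) are each identically zero for all t ∈ ℝ; in particular, each of these two quantities is separately conserved along this trajectory. -/
/-!
Write `r(t) = ½(e^{iωt} + e^{2iωt})`. Shifting time by `2τ = π/ω` negates `e^{iωt}` and fixes
`e^{2iωt}`, so `r(t) - r(t + 2τ) = e^{iωt}`. Hence `r₁₃(t) = e^{iωt}` and `r₂₄(t) = i e^{iωt}` are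
perpendicular, and so are their derivatives `iω e^{iωt}` and `-ω e^{iωt}`, which are `p₁₃/m`
and `p₂₄/m`.
-/

noncomputable section

/-- The trisectrix limaçon curve
`r(t) = (½(cos ωt + cos 2ωt), ½(sin ωt + sin 2ωt))`. -/
def limax (ω : ℝ) : ℝ → Plane := fun t =>
  (WithLp.equiv 2 (Fin 2 → ℝ)).symm
    ![(Real.cos (ω * t) + Real.cos (2 * ω * t)) / 2,
      (Real.sin (ω * t) + Real.sin (2 * ω * t)) / 2]

open Real

def unitVec (θ : ℝ) : Plane := WithLp.toLp 2 ![cos θ, sin θ]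

lemma unitVec_add_pi (θ : ℝ) : unitVec (θ + π) = -unitVec θ := by
  ext i; fin_cases i <;> simp [unitVec]

lemma unitVec_add_two_pi (θ : ℝ) : unitVec (θ + 2 * π) = unitVec θ := by
  ext i; fin_cases i <;> simp [unitVec]

lemma inner_unitVec_add_pi_div_two (θ : ℝ) :
    inner ℝ (unitVec θ) (unitVec (θ + π / 2)) = 0 := by
  simp [unitVec, PiLp.inner_apply, Fin.sum_univ_two, cos_add_pi_div_two, sin_add_pi_div_two]
  ring

lemma hasDerivAt_unitVec (θ : ℝ) : HasDerivAt unitVec (unitVec (θ + π / 2)) θ := by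
  have h : HasDerivAt (fun φ => ![cos φ, sin φ]) ![-sin θ, cos θ] θ := by
    rw [hasDerivAt_pi]
    intro i; fin_cases i
    · simpa using hasDerivAt_cos θ
    · simpa using hasDerivAt_sin θ
  rw [show unitVec (θ + π / 2) = WithLp.toLp 2 ![-sin θ, cos θ] by
    simp [unitVec, cos_add_pi_div_two, sin_add_pi_div_two]]
  exact (EuclideanSpace.equiv (Fin 2) ℝ).symm.hasFDerivAt.comp_hasDerivAt θ h

lemma hasDerivAt_unitVec_mul (ω t : ℝ) :
    HasDerivAt (fun s => unitVec (ω * s)) (ω • unitVec (ω * t + π / 2)) t := by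
  have h := (hasDerivAt_unitVec (ω * t)).scomp t ((hasDerivAt_id t).const_mul ω)
  rw [mul_one] at h
  exact h

lemma limax_eq (ω t : ℝ) :
    limax ω t = (1 / 2 : ℝ) • (unitVec (ω * t) + unitVec (2 * ω * t)) := by
  ext i; fin_cases i <;> simp [limax, unitVec] <;> ring

lemma differentiable_limax (ω : ℝ) : Differentiable ℝ (limax ω) := by
  intro t
  rw [show limax ω = fun t => (1 / 2 : ℝ) • (unitVec (ω * t) + unitVec (2 * ω * t)) from
    funext (limax_eq ω)]
  exact (((hasDerivAt_unitVec_mul ω t).add (hasDerivAt_unitVec_mul (2 * ω) t)).const_smul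
    (1 / 2 : ℝ)).differentiableAt

lemma limax_sub_limax_add_pi_div {ω : ℝ} (hω : ω ≠ 0) (t : ℝ) :
    limax ω t - limax ω (t + π / ω) = unitVec (ω * t) := by
  have h₁ : ω * (t + π / ω) = ω * t + π := by field_simp
  have h₂ : 2 * ω * (t + π / ω) = 2 * ω * t + 2 * π := by field_simp
  rw [limax_eq, limax_eq, h₁, h₂, unitVec_add_pi, unitVec_add_two_pi]
  module

lemma deriv_limax_sub_deriv_limax_add_pi_div {ω : ℝ} (hω : ω ≠ 0) (t : ℝ) :
    deriv (limax ω) t - deriv (limax ω) (t + π / ω) = ω • unitVec (ω * t + π / 2) := by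
  have hdiff : limax ω - (fun s => limax ω (s + π / ω)) = fun s => unitVec (ω * s) :=
    funext (limax_sub_limax_add_pi_div hω)
  rw [← deriv_comp_add_const, ← deriv_sub (differentiable_limax ω t)
    (differentiableAt_comp_add_const.mpr (differentiable_limax ω _)), hdiff]
  exact (hasDerivAt_unitVec_mul ω t).deriv

theorem particular_integrals_limax_general (m ω : ℝ) (hω : 0 < ω) :
    ∀ t : ℝ,
      (inner ℝ (limax ω t - limax ω (t + 2 * (Real.pi / (2 * ω))))
        (limax ω (t + Real.pi / (2 * ω)) - limax ω (t + 3 * (Real.pi / (2 * ω)))) : ℝ) = 0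
      ∧
      (inner ℝ
        (m • deriv (fun s => limax ω s) t
          - m • deriv (fun s => limax ω (s + 2 * (Real.pi / (2 * ω)))) t)
        (m • deriv (fun s => limax ω (s + Real.pi / (2 * ω))) t
          - m • deriv (fun s => limax ω (s + 3 * (Real.pi / (2 * ω)))) t) : ℝ) = 0 := by
  intro t
  have h₂ : 2 * (π / (2 * ω)) = π / ω := by field_simp
  have h₃ : t + 3 * (π / (2 * ω)) = t + π / (2 * ω) + π / ω := by field_simp; ring
  have hτ : ω * (t + π / (2 * ω)) = ω * t + π / 2 := by field_simp
  simp only [deriv_comp_add_const, h₂, h₃, ← smul_sub, real_inner_smul_left,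
    real_inner_smul_right, limax_sub_limax_add_pi_div hω.ne',
    deriv_limax_sub_deriv_limax_add_pi_div hω.ne', hτ, inner_unitVec_add_pi_div_two, mul_zero,
    and_self]

/-- **particular integrals.** Along the trisectrix limaçon solution
`rₖ(t) = r(t + (k−1)τ)`, `τ = π/(2ω)`, the scalar products `r₁₃ · r₂₄` and `p₁₃ · p₂₄`
are each identically zero (hence each is separately conserved along this trajectory). -/
theorem particular_integrals_limax (m ω : ℝ) (hm : 0 < m) (hω : 0 < ω) :
    ∀ t : ℝ,
      (inner ℝ (limax ω t - limax ω (t + 2 * (Real.pi / (2 * ω))))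
        (limax ω (t + Real.pi / (2 * ω)) - limax ω (t + 3 * (Real.pi / (2 * ω)))) : ℝ) = 0
      ∧
      (inner ℝ
        (m • deriv (fun s => limax ω s) t
          - m • deriv (fun s => limax ω (s + 2 * (Real.pi / (2 * ω)))) t)
        (m • deriv (fun s => limax ω (s + Real.pi / (2 * ω))) t
          - m • deriv (fun s => limax ω (s + 3 * (Real.pi / (2 * ω)))) t) : ℝ) = 0 :=
  particular_integrals_limax_general m ω hω
end
end
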